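/- Let a_1,...,a_n be positive canonical-form dyadic rational games and b_1,...,b_m negative ones with Σ l(a_i) − Σ r(b_i) < 0, and let X be any left end belonging to the dead-ending universe E. Then the misère outcome of a_1 + ... + a_n + b_1 + ... + b_m + X is L^-. -/

import Mathlib

universe u

namespace SetTheory

/-- Pre-games (ported from the older Mathlib, where `SetTheory.PGame` was defined). -/
inductive PGame : Type (u + 1)
  | mk : ∀ α β : Type u, (α → PGame) → (β → PGame) → PGame

namespace PGame

def LeftMoves : PGame → Type u
  | mk l _ _ _ => l

def RightMoves : PGame → Type u
  | mk _ r _ _ => r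

def moveLeft : ∀ g : PGame, LeftMoves g → PGame
  | mk _l _ L _ => L

def moveRight : ∀ g : PGame, RightMoves g → PGame
  | mk _ _r _ R => R

inductive IsOption : PGame → PGame → Prop
  | moveLeft {x : PGame} (i : x.LeftMoves) : IsOption (x.moveLeft i) x
  | moveRight {x : PGame} (i : x.RightMoves) : IsOption (x.moveRight i) x

instance : Zero PGame :=
  ⟨⟨PEmpty, PEmpty, PEmpty.elim, PEmpty.elim⟩⟩

def neg : PGame → PGame
  | ⟨l, r, L, R⟩ => ⟨r, l, fun i => neg (R i), fun i => neg (L i)⟩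

instance : Neg PGame :=
  ⟨neg⟩

noncomputable instance : Add PGame.{u} :=
  ⟨fun x y => by
    induction x generalizing y with | mk xl xr _ _ IHxl IHxr => _
    induction y with | mk yl yr yL yR IHyl IHyr => _
    have y := mk yl yr yL yR
    refine ⟨xl ⊕ yl, xr ⊕ yr, Sum.rec ?_ ?_, Sum.rec ?_ ?_⟩
    · exact fun i => IHxl i y
    · exact fun i => IHyl i
    · exact fun i => IHxr i y
    · exact fun i => IHyr i⟩

end PGame

end SetTheory

open SetTheory

namespace Misere

/-- `F` is a follower of `G`: reachable from `G` by a (possibly empty) sequence of moves. -/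
def Follower (F G : PGame) : Prop := Relation.ReflTransGen PGame.IsOption F G

def IsLeftEnd (G : PGame) : Prop := IsEmpty G.LeftMoves
def IsRightEnd (G : PGame) : Prop := IsEmpty G.RightMoves

/-- A dead left end: every follower (including itself) is a left end. -/
def DeadLeftEnd (G : PGame) : Prop := ∀ F, Follower F G → IsLeftEnd F
def DeadRightEnd (G : PGame) : Prop := ∀ F, Follower F G → IsRightEnd F
def DeadEnd (G : PGame) : Prop := DeadLeftEnd G ∨ DeadRightEnd G

/-- A game is dead-ending if every end follower is a dead end. -/
def DeadEnding (G : PGame) : Prop :=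
  ∀ F, Follower F G → (IsLeftEnd F → DeadLeftEnd F) ∧ (IsRightEnd F → DeadRightEnd F)

/-- The universe of dead-ending games. -/
def E : Set PGame := {G | DeadEnding G}

/-- `(misereWins G).1` : Left, moving first, wins `G` under misère play;
    `(misereWins G).2` : Right, moving first, wins `G` under misère play. -/
def misereWins : PGame → Prop × Prop
  | PGame.mk l r L R =>
      (IsEmpty l ∨ ∃ i, ¬ (misereWins (L i)).2,
       IsEmpty r ∨ ∃ j, ¬ (misereWins (R j)).1)

def LeftWinsGF (G : PGame) : Prop := (misereWins G).1
def RightWinsGF (G : PGame) : Prop := (misereWins G).2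

inductive MOutcome : Type
  | L | N | P | R
deriving DecidableEq

/-- Partial order on misère outcomes: `R` minimal, `L` maximal, `N` and `P` incomparable. -/
def MOutcome.le : MOutcome → MOutcome → Prop
  | .R, _ => True
  | _, .L => True
  | a, b => a = b

instance : LE MOutcome := ⟨MOutcome.le⟩

/-- The misère outcome of a game. -/
noncomputable def outcome (G : PGame) : MOutcome := by
  classical
  exact if LeftWinsGF G then (if RightWinsGF G then .N else .L)
        else (if RightWinsGF G then .R else .P)

/-- `G ≡ H (mod U)`. -/
def equivMod (U : Set PGame) (G H : PGame) : Prop :=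
  ∀ X ∈ U, outcome (G + X) = outcome (H + X)

/-- `G ≧ H (mod U)`. -/
def geMod (U : Set PGame) (G H : PGame) : Prop :=
  ∀ X ∈ U, outcome (H + X) ≤ outcome (G + X)

/-- `LeftChain G n`: there is a sequence of `n` consecutive Left moves from `G`
ending at the zero position. -/
inductive LeftChain : PGame → ℕ → Prop
  | zero (G : PGame) : IsLeftEnd G → IsRightEnd G → LeftChain G 0
  | succ (G : PGame) (i : G.LeftMoves) (n : ℕ) :
      LeftChain (G.moveLeft i) n → LeftChain G (n + 1)

inductive RightChain : PGame → ℕ → Prop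
  | zero (G : PGame) : IsLeftEnd G → IsRightEnd G → RightChain G 0
  | succ (G : PGame) (j : G.RightMoves) (n : ℕ) :
      RightChain (G.moveRight j) n → RightChain G (n + 1)

/-- Left-length: minimum number of consecutive Left moves needed to reach zero. -/
noncomputable def leftLength (G : PGame) : ℕ := sInf {n | LeftChain G n}

/-- Right-length: minimum number of consecutive Right moves needed to reach zero. -/
noncomputable def rightLength (G : PGame) : ℕ := sInf {n | RightChain G n}

/-- Normal-play canonical form of a nonnegative integer. -/
def natGame : ℕ → PGame
  | 0 => 0
  | n + 1 => PGame.mk PUnit PEmpty (fun _ => natGame n) PEmpty.elim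

/-- Normal-play canonical form of an integer (negatives are conjugates). -/
def intGame (n : ℤ) : PGame :=
  if 0 ≤ n then natGame n.toNat else -natGame (-n).toNat

/-- Normal-play canonical form of the dyadic rational `m / 2 ^ j`. -/
def dyadicGame : ℤ → ℕ → PGame
  | m, 0 => intGame m
  | m, j + 1 =>
      if m % 2 = 0 then dyadicGame (m / 2) j
      else PGame.mk PUnit PUnit (fun _ => dyadicGame ((m - 1) / 2) j)
            (fun _ => dyadicGame ((m + 1) / 2) j)

/-- The closure of dead ends: finite disjunctive sums of dead ends. -/
def DeadEndClosure : Set PGame :=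
  {G | ∃ l : List PGame, (∀ x ∈ l, DeadEnd x) ∧ G = l.sum}

end Misere

open Misere SetTheory PGame

/-!
Write the sum as a sum of dyadics whose positive terms have total left-length `a` and whose
negative terms have total right-length `b`, and let `Y` be a dead left end. By induction on the
position: if `a ≤ b` then Left, moving first, wins `G + Y`, and if `a < b` then Right, moving
first, loses. Left lowers `a` by one along the Left chain of a positive dyadic; when `a = 0` she
either has no move at all (a misère win) or moves in a negative dyadic, which keeps `a = 0` and
`b > 0`. Right has a move because `b > 0`; a Right move in a dyadic does not raise `a` and
lowers `b` by at most one, and a Right move in `Y` leaves a dead left end.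
-/

namespace SetTheory.PGame

noncomputable def moveRecOn {C : PGame → Sort*} (x : PGame)
    (IH : ∀ y : PGame, (∀ i, C (y.moveLeft i)) → (∀ j, C (y.moveRight j)) → C y) : C x :=
  x.rec fun yl yr yL yR => IH (mk yl yr yL yR)

theorem leftMoves_add : ∀ x y : PGame, (x + y).LeftMoves = (x.LeftMoves ⊕ y.LeftMoves)
  | ⟨_, _, _, _⟩, ⟨_, _, _, _⟩ => rfl

theorem rightMoves_add : ∀ x y : PGame, (x + y).RightMoves = (x.RightMoves ⊕ y.RightMoves)
  | ⟨_, _, _, _⟩, ⟨_, _, _, _⟩ => rfl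

def toLeftMovesAdd {x y : PGame} : x.LeftMoves ⊕ y.LeftMoves ≃ (x + y).LeftMoves :=
  Equiv.cast (leftMoves_add x y).symm

def toRightMovesAdd {x y : PGame} : x.RightMoves ⊕ y.RightMoves ≃ (x + y).RightMoves :=
  Equiv.cast (rightMoves_add x y).symm

theorem add_moveLeft_inl : ∀ {x : PGame} (y : PGame) (i),
    (x + y).moveLeft (toLeftMovesAdd (Sum.inl i)) = x.moveLeft i + y
  | ⟨_, _, _, _⟩, ⟨_, _, _, _⟩, _ => rfl

theorem add_moveLeft_inr : ∀ (x : PGame) {y : PGame} (i),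
    (x + y).moveLeft (toLeftMovesAdd (Sum.inr i)) = x + y.moveLeft i
  | ⟨_, _, _, _⟩, ⟨_, _, _, _⟩, _ => rfl

theorem add_moveRight_inl : ∀ {x : PGame} (y : PGame) (i),
    (x + y).moveRight (toRightMovesAdd (Sum.inl i)) = x.moveRight i + y
  | ⟨_, _, _, _⟩, ⟨_, _, _, _⟩, _ => rfl

theorem add_moveRight_inr : ∀ (x : PGame) {y : PGame} (i),
    (x + y).moveRight (toRightMovesAdd (Sum.inr i)) = x + y.moveRight i
  | ⟨_, _, _, _⟩, ⟨_, _, _, _⟩, _ => rfl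

theorem isEmpty_leftMoves_add {x y : PGame} (hx : IsEmpty x.LeftMoves)
    (hy : IsEmpty y.LeftMoves) : IsEmpty (x + y).LeftMoves := by
  rw [leftMoves_add]
  infer_instance

theorem neg_zero : -(0 : PGame) = 0 := by
  show PGame.mk _ _ _ _ = PGame.mk _ _ _ _
  congr 1 <;> funext i <;> exact i.elim

end SetTheory.PGame

namespace Misere

theorem leftWinsGF_iff (G : PGame) :
    LeftWinsGF G ↔ IsEmpty G.LeftMoves ∨ ∃ i, ¬ RightWinsGF (G.moveLeft i) := by
  cases G
  rfl

theorem rightWinsGF_iff (G : PGame) :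
    RightWinsGF G ↔ IsEmpty G.RightMoves ∨ ∃ j, ¬ LeftWinsGF (G.moveRight j) := by
  cases G
  rfl

theorem outcome_eq_L {G : PGame} (hL : LeftWinsGF G) (hR : ¬ RightWinsGF G) :
    outcome G = MOutcome.L := by
  unfold outcome
  rw [if_pos hL, if_neg hR]

theorem DeadLeftEnd.isLeftEnd {Y : PGame} (hY : DeadLeftEnd Y) : IsLeftEnd Y :=
  hY Y .refl

theorem DeadLeftEnd.moveRight {Y : PGame} (hY : DeadLeftEnd Y) (k : Y.RightMoves) :
    DeadLeftEnd (Y.moveRight k) :=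
  fun F hF => hY F (hF.tail (.moveRight k))

theorem isRightEnd_natGame (k : ℕ) : IsRightEnd (natGame k) := by
  cases k <;> exact inferInstanceAs (IsEmpty PEmpty)

theorem isLeftEnd_neg_natGame (k : ℕ) : IsLeftEnd (-natGame k) := by
  cases k <;> exact inferInstanceAs (IsEmpty PEmpty)

theorem intGame_of_nonneg {m : ℤ} (hm : 0 ≤ m) : intGame m = natGame m.toNat := by
  rw [intGame, if_pos hm]

theorem intGame_of_nonpos {m : ℤ} (hm : m ≤ 0) : intGame m = -natGame (-m).toNat := by
  rcases hm.lt_or_eq with hm | rfl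
  · rw [intGame, if_neg hm.not_ge]
  · exact neg_zero.symm

theorem intGame_of_pos {m : ℤ} (hm : 0 < m) :
    intGame m = PGame.mk PUnit PEmpty (fun _ => intGame (m - 1)) PEmpty.elim := by
  rw [intGame_of_nonneg hm.le, intGame_of_nonneg (by omega : 0 ≤ m - 1),
    show m.toNat = (m - 1).toNat + 1 by omega]
  rfl

theorem intGame_of_neg {m : ℤ} (hm : m < 0) :
    intGame m = PGame.mk PEmpty PUnit PEmpty.elim (fun _ => intGame (m + 1)) := by
  rw [intGame_of_nonpos hm.le, intGame_of_nonpos (by omega : m + 1 ≤ 0),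
    show (-m).toNat = (-(m + 1)).toNat + 1 by omega]
  show PGame.mk _ _ _ _ = _
  congr
  funext i
  exact i.elim

theorem isRightEnd_intGame {m : ℤ} (hm : 0 ≤ m) : IsRightEnd (intGame m) := by
  rw [intGame_of_nonneg hm]
  exact isRightEnd_natGame _

theorem isLeftEnd_intGame {m : ℤ} (hm : m ≤ 0) : IsLeftEnd (intGame m) := by
  rw [intGame_of_nonpos hm]
  exact isLeftEnd_neg_natGame _

theorem dyadicGame_zero (m : ℤ) : dyadicGame m 0 = intGame m := rfl

theorem dyadicGame_succ_of_even {m : ℤ} (j : ℕ) (hm : m % 2 = 0) :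
    dyadicGame m (j + 1) = dyadicGame (m / 2) j := by
  rw [dyadicGame, if_pos hm]

theorem dyadicGame_succ_of_odd {m : ℤ} (j : ℕ) (hm : m % 2 ≠ 0) :
    dyadicGame m (j + 1) = PGame.mk PUnit PUnit (fun _ => dyadicGame ((m - 1) / 2) j)
      (fun _ => dyadicGame ((m + 1) / 2) j) := by
  rw [dyadicGame, if_neg hm]

/-- The left-length of `dyadicGame m j`, read off its unique chain of Left options
(`0` when `m ≤ 0`). -/
def dyadicLeftLength : ℤ → ℕ → ℕ
  | m, 0 => m.toNat
  | m, j + 1 =>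
      if m % 2 = 0 then dyadicLeftLength (m / 2) j
      else if 0 < m then dyadicLeftLength ((m - 1) / 2) j + 1 else 0

def dyadicRightLength (m : ℤ) (j : ℕ) : ℕ := dyadicLeftLength (-m) j

theorem dyadicLeftLength_zero (m : ℤ) : dyadicLeftLength m 0 = m.toNat := rfl

theorem dyadicLeftLength_succ_of_even {m : ℤ} (j : ℕ) (hm : m % 2 = 0) :
    dyadicLeftLength m (j + 1) = dyadicLeftLength (m / 2) j := by
  simp [dyadicLeftLength, hm]

theorem dyadicLeftLength_succ_of_odd_of_pos {m : ℤ} (j : ℕ) (hm : m % 2 ≠ 0) (hpos : 0 < m) :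
    dyadicLeftLength m (j + 1) = dyadicLeftLength ((m - 1) / 2) j + 1 := by
  simp [dyadicLeftLength, hm, hpos]

theorem dyadicLeftLength_eq_zero_of_nonpos {m : ℤ} (j : ℕ) (hm : m ≤ 0) :
    dyadicLeftLength m j = 0 := by
  induction j generalizing m with
  | zero => rw [dyadicLeftLength_zero]; omega
  | succ j ih =>
    by_cases h2 : m % 2 = 0
    · rw [dyadicLeftLength_succ_of_even j h2]; exact ih (by omega)
    · simp [dyadicLeftLength, h2, hm.not_gt]

theorem dyadicLeftLength_pos {m : ℤ} (j : ℕ) (hm : 0 < m) : 0 < dyadicLeftLength m j := by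
  induction j generalizing m with
  | zero => rw [dyadicLeftLength_zero]; omega
  | succ j ih =>
    by_cases h2 : m % 2 = 0
    · rw [dyadicLeftLength_succ_of_even j h2]; exact ih (by omega)
    · rw [dyadicLeftLength_succ_of_odd_of_pos j h2 hm]; omega

theorem dyadicLeftLength_add_one_le (m : ℤ) (j : ℕ) :
    dyadicLeftLength (m + 1) j ≤ dyadicLeftLength m j + 1 := by
  induction j generalizing m with
  | zero => simp only [dyadicLeftLength_zero]; omega
  | succ j ih =>
    by_cases h2 : m % 2 = 0
    · rw [dyadicLeftLength_succ_of_even j h2]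
      by_cases hpos : 0 < m + 1
      · rw [dyadicLeftLength_succ_of_odd_of_pos j (by omega) hpos,
          show (m + 1 - 1) / 2 = m / 2 by omega]
      · rw [dyadicLeftLength_eq_zero_of_nonpos _ (by omega)]; omega
    · rw [dyadicLeftLength_succ_of_even j (by omega)]
      by_cases hpos : 0 < m
      · rw [dyadicLeftLength_succ_of_odd_of_pos j h2 hpos,
          show (m + 1) / 2 = (m - 1) / 2 + 1 by omega]
        have := ih ((m - 1) / 2)
        omega
      · rw [dyadicLeftLength_eq_zero_of_nonpos _ (by omega)]; omega

theorem dyadicRightLength_zero (m : ℤ) : dyadicRightLength m 0 = (-m).toNat := rfl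

theorem dyadicRightLength_succ_of_even {m : ℤ} (j : ℕ) (hm : m % 2 = 0) :
    dyadicRightLength m (j + 1) = dyadicRightLength (m / 2) j := by
  rw [dyadicRightLength, dyadicLeftLength_succ_of_even j (by omega),
    show -m / 2 = -(m / 2) by omega, dyadicRightLength]

theorem dyadicRightLength_succ_of_odd_of_neg {m : ℤ} (j : ℕ) (hm : m % 2 ≠ 0) (hneg : m < 0) :
    dyadicRightLength m (j + 1) = dyadicRightLength ((m + 1) / 2) j + 1 := by
  rw [dyadicRightLength, dyadicLeftLength_succ_of_odd_of_pos j (by omega) (by omega),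
    show (-m - 1) / 2 = -((m + 1) / 2) by omega, dyadicRightLength]

theorem dyadicRightLength_eq_zero_of_nonneg {m : ℤ} (j : ℕ) (hm : 0 ≤ m) :
    dyadicRightLength m j = 0 :=
  dyadicLeftLength_eq_zero_of_nonpos j (by omega)

theorem dyadicRightLength_pos {m : ℤ} (j : ℕ) (hm : m < 0) : 0 < dyadicRightLength m j :=
  dyadicLeftLength_pos j (by omega)

theorem leftChain_natGame (k : ℕ) : LeftChain (natGame k) k := by
  induction k with
  | zero => exact .zero _ (inferInstanceAs (IsEmpty PEmpty)) (isRightEnd_natGame 0)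
  | succ k ih => exact .succ (natGame (k + 1)) PUnit.unit k ih

theorem eq_of_leftChain_natGame {k n : ℕ} (h : LeftChain (natGame k) n) : n = k := by
  induction k generalizing n with
  | zero =>
    cases h with
    | zero => rfl
    | succ _ i => exact PEmpty.elim i
  | succ k ih =>
    cases h with
    | zero _ hL => exact (hL.false PUnit.unit).elim
    | succ _ _ n h => rw [ih h]

theorem rightChain_neg_natGame (k : ℕ) : RightChain (-natGame k) k := by
  induction k with
  | zero => exact .zero _ (isLeftEnd_neg_natGame 0) (inferInstanceAs (IsEmpty PEmpty))
  | succ k ih => exact .succ (-natGame (k + 1)) PUnit.unit k ih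

theorem leftChain_dyadicGame {m : ℤ} (j : ℕ) (hm : 0 ≤ m) :
    LeftChain (dyadicGame m j) (dyadicLeftLength m j) := by
  induction j generalizing m with
  | zero =>
    rw [dyadicGame_zero, intGame_of_nonneg hm]
    exact leftChain_natGame _
  | succ j ih =>
    by_cases h2 : m % 2 = 0
    · rw [dyadicGame_succ_of_even j h2, dyadicLeftLength_succ_of_even j h2]
      exact ih (by omega)
    · rw [dyadicGame_succ_of_odd j h2, dyadicLeftLength_succ_of_odd_of_pos j h2 (by omega)]
      exact .succ (PGame.mk _ _ _ _) PUnit.unit _ (ih (by omega))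

theorem eq_of_leftChain_dyadicGame {m : ℤ} {j n : ℕ} (hm : 0 ≤ m)
    (h : LeftChain (dyadicGame m j) n) : n = dyadicLeftLength m j := by
  induction j generalizing m n with
  | zero =>
    rw [dyadicGame_zero, intGame_of_nonneg hm] at h
    exact eq_of_leftChain_natGame h
  | succ j ih =>
    by_cases h2 : m % 2 = 0
    · rw [dyadicGame_succ_of_even j h2] at h
      rw [dyadicLeftLength_succ_of_even j h2]
      exact ih (by omega) h
    · rw [dyadicGame_succ_of_odd j h2] at h
      rw [dyadicLeftLength_succ_of_odd_of_pos j h2 (by omega)]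
      cases h with
      | zero _ hL => exact (hL.false PUnit.unit).elim
      | succ _ _ n h => rw [ih (by omega) h]

theorem rightChain_dyadicGame {m : ℤ} (j : ℕ) (hm : m ≤ 0) :
    RightChain (dyadicGame m j) (dyadicRightLength m j) := by
  induction j generalizing m with
  | zero =>
    rw [dyadicGame_zero, intGame_of_nonpos hm]
    exact rightChain_neg_natGame _
  | succ j ih =>
    by_cases h2 : m % 2 = 0
    · rw [dyadicGame_succ_of_even j h2, dyadicRightLength_succ_of_even j h2]
      exact ih (by omega)
    · rw [dyadicGame_succ_of_odd j h2, dyadicRightLength_succ_of_odd_of_neg j h2 (by omega)]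
      exact .succ (PGame.mk _ _ _ _) PUnit.unit _ (ih (by omega))

theorem leftLength_dyadicGame {m : ℤ} (j : ℕ) (hm : 0 ≤ m) :
    leftLength (dyadicGame m j) = dyadicLeftLength m j :=
  eq_of_leftChain_dyadicGame hm (Nat.sInf_mem ⟨_, leftChain_dyadicGame j hm⟩)

theorem rightLength_dyadicGame_le {m : ℤ} (j : ℕ) (hm : m ≤ 0) :
    rightLength (dyadicGame m j) ≤ dyadicRightLength m j :=
  Nat.sInf_le (rightChain_dyadicGame j hm)

/-- `DyadicSum G a b`: `G` is a sum of canonical dyadics whose arithmetic left-lengths add up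
to `a` and right-lengths to `b`. -/
inductive DyadicSum : PGame → ℕ → ℕ → Prop
  | dyadic (m : ℤ) (j : ℕ) :
      DyadicSum (dyadicGame m j) (dyadicLeftLength m j) (dyadicRightLength m j)
  | add {G H : PGame} {a b c d : ℕ} :
      DyadicSum G a b → DyadicSum H c d → DyadicSum (G + H) (a + c) (b + d)

theorem DyadicSum.zero : DyadicSum 0 0 0 := .dyadic 0 0

theorem DyadicSum.of_eq {G : PGame} {m : ℤ} {j a b : ℕ} (hG : G = dyadicGame m j)
    (ha : dyadicLeftLength m j = a) (hb : dyadicRightLength m j = b) : DyadicSum G a b := by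
  subst hG ha hb
  exact .dyadic m j

theorem exists_leftMove_dyadicGame {m : ℤ} {j : ℕ} (h : 0 < dyadicLeftLength m j) :
    ∃ i, DyadicSum ((dyadicGame m j).moveLeft i)
      (dyadicLeftLength m j - 1) (dyadicRightLength m j) := by
  induction j generalizing m with
  | zero =>
    have hm : 0 < m := by rw [dyadicLeftLength_zero] at h; omega
    rw [dyadicGame_zero, intGame_of_pos hm, dyadicRightLength_eq_zero_of_nonneg 0 hm.le]
    refine ⟨PUnit.unit,
      .of_eq (m := m - 1) rfl ?_ (dyadicRightLength_eq_zero_of_nonneg 0 (by omega))⟩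
    rw [dyadicLeftLength_zero, dyadicLeftLength_zero]
    omega
  | succ j ih =>
    by_cases h2 : m % 2 = 0
    · rw [dyadicLeftLength_succ_of_even j h2] at h
      rw [dyadicGame_succ_of_even j h2, dyadicLeftLength_succ_of_even j h2,
        dyadicRightLength_succ_of_even j h2]
      exact ih h
    · have hm : 0 < m := by
        by_contra hm
        rw [dyadicLeftLength_eq_zero_of_nonpos _ (by omega)] at h
        omega
      rw [dyadicGame_succ_of_odd j h2, dyadicLeftLength_succ_of_odd_of_pos j h2 hm,
        dyadicRightLength_eq_zero_of_nonneg _ hm.le]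
      exact ⟨PUnit.unit,
        .of_eq rfl (by omega) (dyadicRightLength_eq_zero_of_nonneg _ (by omega))⟩

theorem isLeftEnd_or_exists_leftMove_dyadicGame {m : ℤ} {j : ℕ}
    (h : dyadicLeftLength m j = 0) :
    IsLeftEnd (dyadicGame.{u} m j) ∨
      ∃ i b, 0 < b ∧ DyadicSum ((dyadicGame.{u} m j).moveLeft i) 0 b := by
  induction j generalizing m with
  | zero =>
    rw [dyadicLeftLength_zero] at h
    exact .inl (isLeftEnd_intGame (by omega))
  | succ j ih =>
    by_cases h2 : m % 2 = 0
    · rw [dyadicLeftLength_succ_of_even j h2] at h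
      rw [dyadicGame_succ_of_even j h2]
      exact ih h
    · have hm : m < 0 := by
        by_contra hm
        have := dyadicLeftLength_pos (j + 1) (m := m) (by omega)
        omega
      rw [dyadicGame_succ_of_odd j h2]
      exact .inr ⟨PUnit.unit, _, dyadicRightLength_pos j (m := (m - 1) / 2) (by omega),
        .of_eq rfl (dyadicLeftLength_eq_zero_of_nonpos _ (by omega)) rfl⟩

theorem nonempty_rightMoves_dyadicGame {m : ℤ} {j : ℕ} (h : 0 < dyadicRightLength m j) :
    Nonempty (dyadicGame m j).RightMoves := by
  induction j generalizing m with
  | zero =>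
    have hm : m < 0 := by rw [dyadicRightLength_zero] at h; omega
    rw [dyadicGame_zero, intGame_of_neg hm]
    exact ⟨PUnit.unit⟩
  | succ j ih =>
    by_cases h2 : m % 2 = 0
    · rw [dyadicRightLength_succ_of_even j h2] at h
      rw [dyadicGame_succ_of_even j h2]
      exact ih h
    · rw [dyadicGame_succ_of_odd j h2]
      exact ⟨PUnit.unit⟩

theorem exists_of_rightMove_dyadicGame (m : ℤ) (j : ℕ) :
    ∀ k : (dyadicGame m j).RightMoves, ∃ a b,
      a ≤ dyadicLeftLength m j ∧ dyadicRightLength m j ≤ b + 1 ∧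
      DyadicSum ((dyadicGame m j).moveRight k) a b := by
  induction j generalizing m with
  | zero =>
    rcases lt_or_ge m 0 with hm | hm
    · rw [dyadicGame_zero, intGame_of_neg hm]
      intro k
      refine ⟨_, _, ?_, ?_, DyadicSum.dyadic (m + 1) 0⟩ <;>
        simp only [dyadicLeftLength_zero, dyadicRightLength_zero] <;> omega
    · exact (isRightEnd_intGame hm).elim
  | succ j ih =>
    by_cases h2 : m % 2 = 0
    · rw [dyadicLeftLength_succ_of_even j h2, dyadicRightLength_succ_of_even j h2]
      rw [dyadicGame_succ_of_even j h2]
      exact ih _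
    · rw [dyadicGame_succ_of_odd j h2]
      intro k
      refine ⟨_, _, ?_, ?_, DyadicSum.dyadic ((m + 1) / 2) j⟩
      · rcases lt_or_ge 0 m with hm | hm
        · rw [dyadicLeftLength_succ_of_odd_of_pos j h2 hm,
            show (m + 1) / 2 = (m - 1) / 2 + 1 by omega]
          exact dyadicLeftLength_add_one_le _ _
        · rw [dyadicLeftLength_eq_zero_of_nonpos _ (by omega)]
          exact Nat.zero_le _
      · rcases lt_or_ge m 0 with hm | hm
        · rw [dyadicRightLength_succ_of_odd_of_neg j h2 hm]
        · rw [dyadicRightLength_eq_zero_of_nonneg _ hm]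
          exact Nat.zero_le _

namespace DyadicSum

variable {G : PGame} {a b : ℕ}

theorem exists_leftMove_of_pos (hG : DyadicSum G a b) (ha : 0 < a) :
    ∃ i, DyadicSum (G.moveLeft i) (a - 1) b := by
  induction hG with
  | dyadic m j => exact exists_leftMove_dyadicGame ha
  | @add G H a b c d hG hH ihG ihH =>
    rcases Nat.eq_zero_or_pos a with rfl | ha'
    · obtain ⟨i, hi⟩ := ihH (by omega)
      refine ⟨toLeftMovesAdd (.inr i), ?_⟩
      rw [add_moveLeft_inr]
      simpa using hG.add hi
    · obtain ⟨i, hi⟩ := ihG ha'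
      refine ⟨toLeftMovesAdd (.inl i), ?_⟩
      rw [add_moveLeft_inl, show a + c - 1 = a - 1 + c by omega]
      exact hi.add hH

theorem isLeftEnd_or_exists_leftMove (hG : DyadicSum G a b) (ha : a = 0) :
    IsLeftEnd G ∨ ∃ i b', 0 < b' ∧ DyadicSum (G.moveLeft i) 0 b' := by
  induction hG with
  | dyadic m j => exact isLeftEnd_or_exists_leftMove_dyadicGame ha
  | @add G H a b c d hG hH ihG ihH =>
    obtain ⟨rfl, rfl⟩ : a = 0 ∧ c = 0 := by omega
    rcases ihG rfl with hGend | ⟨i, b', hb', hi⟩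
    · rcases ihH rfl with hHend | ⟨i, d', hd', hi⟩
      · exact .inl (isEmpty_leftMoves_add hGend hHend)
      · refine .inr ⟨toLeftMovesAdd (.inr i), b + d', by omega, ?_⟩
        rw [add_moveLeft_inr]
        simpa using hG.add hi
    · refine .inr ⟨toLeftMovesAdd (.inl i), b' + d, by omega, ?_⟩
      rw [add_moveLeft_inl]
      simpa using hi.add hH

theorem nonempty_rightMoves (hG : DyadicSum G a b) (hb : 0 < b) : Nonempty G.RightMoves := by
  induction hG with
  | dyadic m j => exact nonempty_rightMoves_dyadicGame hb
  | @add G H a b c d hG hH ihG ihH =>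
    rcases Nat.eq_zero_or_pos b with rfl | hb'
    · obtain ⟨k⟩ := ihH (by omega)
      exact ⟨toRightMovesAdd (.inr k)⟩
    · obtain ⟨k⟩ := ihG hb'
      exact ⟨toRightMovesAdd (.inl k)⟩

theorem exists_of_rightMove (hG : DyadicSum G a b) (k : G.RightMoves) :
    ∃ a' b', a' ≤ a ∧ b ≤ b' + 1 ∧ DyadicSum (G.moveRight k) a' b' := by
  induction hG with
  | dyadic m j => exact exists_of_rightMove_dyadicGame m j k
  | @add G H a b c d hG hH ihG ihH =>
    obtain ⟨k | k, rfl⟩ := toRightMovesAdd.surjective k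
    · obtain ⟨a', b', ha', hb', hk⟩ := ihG k
      rw [add_moveRight_inl]
      exact ⟨a' + c, b' + d, by omega, by omega, hk.add hH⟩
    · obtain ⟨c', d', hc', hd', hk⟩ := ihH k
      rw [add_moveRight_inr]
      exact ⟨a + c', b + d', by omega, by omega, hG.add hk⟩

end DyadicSum

section Play

variable {G Y : PGame} {a b : ℕ}

theorem leftWinsGF_add_of_le (hY : DeadLeftEnd Y) (hG : DyadicSum G a b) (hab : a ≤ b)
    (ih : ∀ i a' b', DyadicSum (G.moveLeft i) a' b' → a' < b' →
      ¬ RightWinsGF (G.moveLeft i + Y)) :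
    LeftWinsGF (G + Y) := by
  rw [leftWinsGF_iff]
  rcases Nat.eq_zero_or_pos a with rfl | ha
  · rcases hG.isLeftEnd_or_exists_leftMove rfl with hGend | ⟨i, b', hb', hi⟩
    · exact .inl (isEmpty_leftMoves_add hGend hY.isLeftEnd)
    · refine .inr ⟨toLeftMovesAdd (.inl i), ?_⟩
      rw [add_moveLeft_inl]
      exact ih i 0 b' hi hb'
  · obtain ⟨i, hi⟩ := hG.exists_leftMove_of_pos ha
    refine .inr ⟨toLeftMovesAdd (.inl i), ?_⟩
    rw [add_moveLeft_inl]
    exact ih i _ _ hi (by omega)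

theorem not_rightWinsGF_add_of_lt (hG : DyadicSum G a b) (hab : a < b)
    (ihG : ∀ k a' b', DyadicSum (G.moveRight k) a' b' → a' ≤ b' →
      LeftWinsGF (G.moveRight k + Y))
    (ihY : ∀ k, LeftWinsGF (G + Y.moveRight k)) :
    ¬ RightWinsGF (G + Y) := by
  rw [rightWinsGF_iff, not_or, not_isEmpty_iff, not_exists]
  refine ⟨?_, fun k => not_not_intro ?_⟩
  · obtain ⟨k⟩ := hG.nonempty_rightMoves (by omega)
    exact ⟨toRightMovesAdd (.inl k)⟩
  · obtain ⟨k | k, rfl⟩ := toRightMovesAdd.surjective k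
    · obtain ⟨a', b', ha', hb', hk⟩ := hG.exists_of_rightMove k
      rw [add_moveRight_inl]
      exact ihG k a' b' hk (by omega)
    · rw [add_moveRight_inr]
      exact ihY k

theorem DyadicSum.misereWins_add (hY : DeadLeftEnd Y) (hG : DyadicSum G a b) :
    (a ≤ b → LeftWinsGF (G + Y)) ∧ (a < b → ¬ RightWinsGF (G + Y)) := by
  induction Y using PGame.moveRecOn generalizing G a b with
  | _ Y _ ihY =>
  induction G using PGame.moveRecOn generalizing a b with
  | _ G ihGL ihGR =>
  exact ⟨fun hab => leftWinsGF_add_of_le hY hG hab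
      fun i a' b' hi hlt => (ihGL i hi).2 hlt,
    fun hab => not_rightWinsGF_add_of_lt hG hab
      (fun k a' b' hk hle => (ihGR k hk).1 hle)
      (fun k => (ihY k (hY.moveRight k) hG).1 hab.le)⟩

end Play

theorem dyadicSum_sum_of_pos (l : List (ℤ × ℕ)) (hl : ∀ p ∈ l, 0 < p.1) :
    DyadicSum (l.map fun p => dyadicGame p.1 p.2).sum
      (l.map fun p => leftLength (dyadicGame p.1 p.2)).sum 0 := by
  induction l with
  | nil => exact .zero
  | cons p l ih =>
    have hp := hl p List.mem_cons_self
    simp only [List.map_cons, List.sum_cons]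
    exact (DyadicSum.of_eq rfl (leftLength_dyadicGame p.2 hp.le).symm
      (dyadicRightLength_eq_zero_of_nonneg p.2 hp.le)).add
      (ih fun q hq => hl q (List.mem_cons_of_mem p hq))

theorem exists_dyadicSum_sum_of_neg (l : List (ℤ × ℕ)) (hl : ∀ p ∈ l, p.1 < 0) :
    ∃ b, (l.map fun p => rightLength (dyadicGame p.1 p.2)).sum ≤ b ∧
      DyadicSum (l.map fun p => dyadicGame p.1 p.2).sum 0 b := by
  induction l with
  | nil => exact ⟨0, le_rfl, .zero⟩
  | cons p l ih =>
    have hp := hl p List.mem_cons_self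
    obtain ⟨b, hb, hG⟩ := ih fun q hq => hl q (List.mem_cons_of_mem p hq)
    simp only [List.map_cons, List.sum_cons]
    exact ⟨_, Nat.add_le_add (rightLength_dyadicGame_le p.2 hp.le) hb,
      (DyadicSum.of_eq rfl (dyadicLeftLength_eq_zero_of_nonpos p.2 hp.le) rfl).add hG⟩

end Misere

/-- if Σ l(aᵢ) − Σ r(bᵢ) < 0 then adding any dead-ending left end X
still gives a Left win. -/
theorem stmt14 (as bs : List (ℤ × ℕ))
    (ha : ∀ p ∈ as, 0 < p.1) (hb : ∀ p ∈ bs, p.1 < 0)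
    (hk : (as.map fun p => (leftLength (dyadicGame p.1 p.2) : ℤ)).sum -
          (bs.map fun p => (rightLength (dyadicGame p.1 p.2) : ℤ)).sum < 0)
    (X : PGame) (hX : X ∈ E) (hXend : IsLeftEnd X) :
    outcome ((as.map fun p => dyadicGame p.1 p.2).sum +
             (bs.map fun p => dyadicGame p.1 p.2).sum + X) = MOutcome.L := by
  have hXdead : DeadLeftEnd X := (hX X .refl).1 hXend
  obtain ⟨b, hb_le, hbs⟩ := exists_dyadicSum_sum_of_neg bs hb
  have hlt : (as.map fun p => leftLength (dyadicGame p.1 p.2)).sum < b := by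
    zify at hb_le ⊢
    simp only [List.map_map, Function.comp_def] at hb_le ⊢
    omega
  have hwin := ((dyadicSum_sum_of_pos as ha).add hbs).misereWins_add hXdead
  exact outcome_eq_L (hwin.1 (by omega)) (hwin.2 (by omega))
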